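/- If a likelihood ordering satisfies transitivity and equivalence (with respect to a weight function), then the relation ≃ induced by it is an equivalence relation on event-measurement pairs, and the weight function is constant on each ≃-equivalence class whenever the ordering is also minimally rational on a weight-rich measurement set (i.e., E|M ≃ F|N implies W_M(E) = W_N(F)). -/
import Mathlib


/-- A quantum measurement: a finite outcome set with an additive,
normalized, nonnegative weight function on events (subsets of outcomes). -/
structure Measurement where
  S : Finset ℕ
  W : Finset ℕ → ℝ
  nonneg : ∀ E, 0 ≤ W E
  emptyW : W ∅ = 0
  totalW : W S = 1
  addW : ∀ E F : Finset ℕ, E ⊆ S → F ⊆ S → Disjoint E F → W (E ∪ F) = W E + W F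

/-- A likelihood ordering on event–measurement pairs. -/
abbrev LOrder := (Finset ℕ × Measurement) → (Finset ℕ × Measurement) → Prop

/-- E|M ≃ F|N : both directions of the likelihood ordering hold. -/
def lequiv (R : LOrder) (a b : Finset ℕ × Measurement) : Prop := R a b ∧ R b a

/-- E is null with respect to M. -/
def IsNull (R : LOrder) (E : Finset ℕ) (M : Measurement) : Prop := lequiv R (E, M) (∅, M)

/-- Transitivity axiom. -/
def TransAx (R : LOrder) : Prop := ∀ a b c, R a b → R b c → R a c

/-- Dominance axiom. -/
def DominanceAx (R : LOrder) : Prop :=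
  ∀ (M : Measurement) (E F : Finset ℕ), E ⊆ F → F ⊆ M.S →
    R (F, M) (E, M) ∧ (lequiv R (F, M) (E, M) ↔ IsNull R (F \ E) M)

/-- Separation axiom: some event is not null. -/
def SeparationAx (R : LOrder) : Prop :=
  ∃ (E : Finset ℕ) (M : Measurement), E ⊆ M.S ∧ ¬ IsNull R E M

/-- Equivalence axiom: equal weight implies equal likelihood. -/
def EquivalenceAx (R : LOrder) : Prop :=
  ∀ (M N : Measurement) (E F : Finset ℕ), E ⊆ M.S → F ⊆ N.S →
    M.W E = N.W F → lequiv R (E, M) (F, N)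

/-- Weight-richness: every finite list of positive reals summing to 1 is
realized as the singleton-outcome weights of some measurement. -/
def Rich : Prop :=
  ∀ (n : ℕ) (w : Fin n → ℝ), (∀ i, 0 < w i) → (∑ i, w i) = 1 →
    ∃ (M : Measurement) (e : Fin n ↪ ℕ),
      M.S = Finset.univ.map e ∧ ∀ i, M.W {e i} = w i

/-- `Pr` represents the likelihood ordering `R`. -/
def Represents (R : LOrder) (Pr : Finset ℕ × Measurement → ℝ) : Prop :=
  (∀ M : Measurement, Pr (∅, M) = 0) ∧
  (∀ M : Measurement, Pr (M.S, M) = 1) ∧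
  (∀ (M : Measurement) (E F : Finset ℕ), E ⊆ M.S → F ⊆ M.S → Disjoint E F →
      Pr (E ∪ F, M) = Pr (E, M) + Pr (F, M)) ∧
  (∀ a b : Finset ℕ × Measurement, a.1 ⊆ a.2.S → b.1 ⊆ b.2.S →
      (Pr a ≥ Pr b ↔ R a b))

-- AUX

lemma leq_symm (R : LOrder) {a b} (h : lequiv R a b) : lequiv R b a := ⟨h.2, h.1⟩

lemma leq_trans (R : LOrder) (hT : TransAx R) {a b c} (h1 : lequiv R a b)
    (h2 : lequiv R b c) : lequiv R a c :=
  ⟨hT _ _ _ h1.1 h2.1, hT _ _ _ h2.2 h1.2⟩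

lemma W_le_one (M : Measurement) {E : Finset ℕ} (hE : E ⊆ M.S) : M.W E ≤ 1 := by
  have h := M.addW E (M.S \ E) hE Finset.sdiff_subset Finset.disjoint_sdiff
  rw [Finset.union_sdiff_of_subset hE, M.totalW] at h
  have := M.nonneg (M.S \ E)
  linarith

lemma W_sdiff (M : Measurement) {G H : Finset ℕ} (hGH : G ⊆ H) (hH : H ⊆ M.S) :
    M.W (H \ G) = M.W H - M.W G := by
  have h := M.addW G (H \ G) (hGH.trans hH) (Finset.sdiff_subset.trans hH)
    Finset.disjoint_sdiff
  rw [Finset.union_sdiff_of_subset hGH] at h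
  linarith

lemma null_transfer (R : LOrder) (hT : TransAx R) (hE : EquivalenceAx R)
    {M N : Measurement} {E F : Finset ℕ} (hEM : E ⊆ M.S) (hFN : F ⊆ N.S)
    (hw : M.W E = N.W F) (hn : IsNull R E M) : IsNull R F N := by
  have h1 : lequiv R (F, N) (E, M) := hE N M F E hFN hEM hw.symm
  have h2 : lequiv R (∅, M) (∅, N) :=
    hE M N ∅ ∅ (Finset.empty_subset _) (Finset.empty_subset _) (by rw [M.emptyW, N.emptyW])
  exact leq_trans R hT (leq_trans R hT h1 hn) h2

lemma null_subset (R : LOrder) (hT : TransAx R) (hD : DominanceAx R)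
    {M : Measurement} {B D : Finset ℕ} (hBD : B ⊆ D) (hDS : D ⊆ M.S)
    (hn : IsNull R D M) : IsNull R B M := by
  have h1 : R (B, M) (∅, M) := (hD M ∅ B (Finset.empty_subset B) (hBD.trans hDS)).1
  have h2 : R (D, M) (B, M) := (hD M B D hBD hDS).1
  exact ⟨h1, hT _ _ _ hn.2 h2⟩

lemma exists_event (hR : Rich) {x : ℝ} (h0 : 0 ≤ x) (h1 : x ≤ 1) :
    ∃ (P : Measurement) (G : Finset ℕ), G ⊆ P.S ∧ P.W G = x := by
  rcases eq_or_lt_of_le h0 with h|h0'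
  · obtain ⟨P, e, hS, hw⟩ := hR 1 (fun _ => 1) (fun _ => one_pos) (by simp)
    exact ⟨P, ∅, Finset.empty_subset _, by rw [P.emptyW, ← h]⟩
  rcases eq_or_lt_of_le h1 with h|h1'
  · obtain ⟨P, e, hS, hw⟩ := hR 1 (fun _ => 1) (fun _ => one_pos) (by simp)
    exact ⟨P, P.S, subset_rfl, by rw [P.totalW, h]⟩
  · obtain ⟨P, e, hS, hw⟩ := hR 2 ![x, 1 - x]
      (by intro i; fin_cases i <;> simp <;> linarith)
      (by simp [Fin.sum_univ_two])
    refine ⟨P, {e 0}, ?_, ?_⟩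
    · rw [hS]; intro a ha
      simp only [Finset.mem_singleton] at ha
      subst ha; simp
    · have := hw 0; simpa using this

lemma exists_pair (hR : Rich) {x y : ℝ} (h0 : 0 ≤ x) (hxy : x ≤ y) (h1 : y ≤ 1) :
    ∃ (P : Measurement) (G H : Finset ℕ),
      G ⊆ H ∧ H ⊆ P.S ∧ P.W G = x ∧ P.W H = y := by
  rcases eq_or_lt_of_le hxy with rfl|hxy'
  · obtain ⟨P, G, hG, hW⟩ := exists_event hR h0 h1
    exact ⟨P, G, G, subset_rfl, hG, hW, hW⟩
  rcases eq_or_lt_of_le h0 with h|h0'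
  · obtain ⟨P, H, hH, hW⟩ := exists_event hR (h0.trans hxy) h1
    exact ⟨P, ∅, H, Finset.empty_subset _, hH, by rw [P.emptyW, ← h], hW⟩
  rcases eq_or_lt_of_le h1 with h|h1'
  · obtain ⟨P, G, hG, hW⟩ := exists_event hR h0 (hxy.trans h1)
    exact ⟨P, G, P.S, hG, subset_rfl, hW, by rw [P.totalW, h]⟩
  · obtain ⟨P, e, hS, hw⟩ := hR 3 ![x, y - x, 1 - y]
      (by intro i; fin_cases i <;> simp <;> linarith)
      (by simp [Fin.sum_univ_three])
    have hmem : ∀ i : Fin 3, e i ∈ P.S := by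
      intro i; rw [hS]; simp
    have hne : e 0 ≠ e 1 := fun h => by
      have := e.injective h; exact absurd this (by decide)
    have hsub1 : ({e 1} : Finset ℕ) ⊆ P.S := by
      intro a ha; simp only [Finset.mem_singleton] at ha; subst ha; exact hmem 1
    have hsub0 : ({e 0} : Finset ℕ) ⊆ P.S := by
      intro a ha; simp only [Finset.mem_singleton] at ha; subst ha; exact hmem 0
    refine ⟨P, {e 0}, {e 0, e 1}, ?_, ?_, ?_, ?_⟩
    · intro a ha; simp only [Finset.mem_singleton] at ha; subst ha; simp
    · intro a ha; simp only [Finset.mem_insert, Finset.mem_singleton] at ha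
      rcases ha with rfl|rfl
      · exact hmem 0
      · exact hmem 1
    · have := hw 0; simpa using this
    · have hun : ({e 0, e 1} : Finset ℕ) = {e 0} ∪ {e 1} := by
        ext a; simp
      have hdisj : Disjoint ({e 0} : Finset ℕ) {e 1} := by
        simp [Finset.disjoint_singleton, hne]
      rw [hun, P.addW _ _ hsub0 hsub1 hdisj]
      have h0' := hw 0; have h1' := hw 1
      simp at h0' h1'
      rw [h0', h1']; ring

/-- Every event of weight `c` is null. -/
def NulAll (R : LOrder) (c : ℝ) : Prop :=
  ∀ (M : Measurement) (E : Finset ℕ), E ⊆ M.S → M.W E = c → IsNull R E M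

lemma nul_le (R : LOrder) (hT : TransAx R) (hE : EquivalenceAx R)
    (hD : DominanceAx R) (hR : Rich) {P₀ : Measurement} {D : Finset ℕ}
    (hDS : D ⊆ P₀.S) (hnull : IsNull R D P₀) {t : ℝ} (ht : 0 ≤ t)
    (htd : t ≤ P₀.W D) : NulAll R t := by
  have hd1 : P₀.W D ≤ 1 := W_le_one P₀ hDS
  obtain ⟨P, G, H, hGH, hHS, hWG, hWH⟩ := exists_pair hR ht htd hd1
  have hHnull : IsNull R H P :=
    null_transfer R hT hE hDS hHS (by rw [hWH]) hnull
  have hGnull : IsNull R G P := null_subset R hT hD hGH hHS hHnull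
  intro M E hEs hEw
  exact null_transfer R hT hE (hGH.trans hHS) hEs (by rw [hWG, hEw]) hGnull

lemma nul_iter (R : LOrder) (hT : TransAx R) (hE : EquivalenceAx R)
    (hD : DominanceAx R) (hR : Rich) {d : ℝ} (hd : 0 < d)
    (hLE : ∀ t : ℝ, 0 ≤ t → t ≤ d → NulAll R t) :
    ∀ k : ℕ, ∀ c : ℝ, 0 ≤ c → c ≤ 1 → c ≤ k * d → NulAll R c := by
  intro k
  induction k with
  | zero =>
    intro c h0 _ hk
    have : c = 0 := le_antisymm (by simpa using hk) h0
    subst this; exact hLE 0 le_rfl hd.le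
  | succ k ih =>
    intro c h0 h1 hk
    by_cases hc : c ≤ k * d
    · exact ih c h0 h1 hc
    push_neg at hc
    set c' := max (c - d) 0 with hc'def
    have hc'0 : 0 ≤ c' := le_max_right _ _
    have hc'c : c' ≤ c := max_le (by linarith) h0
    have hc'k : c' ≤ k * d := by
      apply max_le
      · have : (k + 1 : ℕ) * d = k * d + d := by push_cast; ring
        linarith [hk.trans_eq this]
      · positivity
    have hcc' : c - c' ≤ d := by
      have : c - d ≤ c' := le_max_left _ _
      linarith
    obtain ⟨P, G, H, hGH, hHS, hWG, hWH⟩ := exists_pair hR hc'0 hc'c h1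
    have hGnull : IsNull R G P := ih c' hc'0 (hc'c.trans h1) hc'k P G (hGH.trans hHS) hWG
    have hsd : P.W (H \ G) = c - c' := by rw [W_sdiff P hGH hHS, hWG, hWH]
    have hsdnull : IsNull R (H \ G) P :=
      hLE (c - c') (by linarith) hcc' P (H \ G) (Finset.sdiff_subset.trans hHS) hsd
    have hHG : lequiv R (H, P) (G, P) := (hD P G H hGH hHS).2.mpr hsdnull
    have hHnull : IsNull R H P := leq_trans R hT hHG hGnull
    intro M E hEs hEw
    exact null_transfer R hT hE hHS hEs (by rw [hWH, hEw]) hHnull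

lemma not_lt_of_lequiv (R : LOrder) (hT : TransAx R) (hE : EquivalenceAx R)
    (hD : DominanceAx R) (hS : SeparationAx R) (hR : Rich)
    {M N : Measurement} {E F : Finset ℕ} (hEM : E ⊆ M.S) (hFN : F ⊆ N.S)
    (h : lequiv R (E, M) (F, N)) : ¬ (M.W E < N.W F) := by
  intro hlt
  have h0 : 0 ≤ M.W E := M.nonneg E
  have h1 : N.W F ≤ 1 := W_le_one N hFN
  obtain ⟨P, G, H, hGH, hHS, hWG, hWH⟩ := exists_pair hR h0 hlt.le h1
  have hGE : lequiv R (G, P) (E, M) := hE P M G E (hGH.trans hHS) hEM (by rw [hWG])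
  have hHF : lequiv R (H, P) (F, N) := hE P N H F hHS hFN (by rw [hWH])
  have hHG : lequiv R (H, P) (G, P) :=
    leq_trans R hT (leq_trans R hT hHF (leq_symm R h)) (leq_symm R hGE)
  have hsdnull : IsNull R (H \ G) P := (hD P G H hGH hHS).2.mp hHG
  have hsd : P.W (H \ G) = N.W F - M.W E := by rw [W_sdiff P hGH hHS, hWG, hWH]
  set d := P.W (H \ G) with hddef
  have hdpos : 0 < d := by rw [hsd]; linarith
  have hLE : ∀ t : ℝ, 0 ≤ t → t ≤ d → NulAll R t := fun t ht htd =>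
    nul_le R hT hE hD hR (Finset.sdiff_subset.trans hHS) hsdnull ht htd
  obtain ⟨k, hk⟩ := exists_nat_ge (1 / d)
  have hkd : 1 ≤ k * d := by
    rw [div_le_iff₀ hdpos] at hk
    linarith
  obtain ⟨E₀, M₀, hE₀, hnn⟩ := hS
  apply hnn
  exact nul_iter R hT hE hD hR hdpos hLE k (M₀.W E₀) (M₀.nonneg E₀)
    (W_le_one M₀ hE₀) ((W_le_one M₀ hE₀).trans hkd) M₀ E₀ hE₀ rfl


/-- ≃ is an equivalence relation, and (under minimal rationality on a rich set)
the weight function is constant on ≃-classes. -/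
theorem stmt7 (R : LOrder) (hT : TransAx R) (hE : EquivalenceAx R)
    (hD : DominanceAx R) (hS : SeparationAx R) (hR : Rich) :
    (∀ (M : Measurement) (E : Finset ℕ), E ⊆ M.S → lequiv R (E, M) (E, M)) ∧
    (∀ a b, lequiv R a b → lequiv R b a) ∧
    (∀ a b c, lequiv R a b → lequiv R b c → lequiv R a c) ∧
    (∀ (M N : Measurement) (E F : Finset ℕ), E ⊆ M.S → F ⊆ N.S →
      lequiv R (E, M) (F, N) → M.W E = N.W F) := by
  refine ⟨fun M E hEs => hE M M E E hEs hEs rfl,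
    fun a b h => leq_symm R h,
    fun a b c h1 h2 => leq_trans R hT h1 h2,
    fun M N E F hEM hFN h => ?_⟩
  rcases lt_trichotomy (M.W E) (N.W F) with hlt|heq|hgt
  · exact absurd hlt (not_lt_of_lequiv R hT hE hD hS hR hEM hFN h)
  · exact heq
  · exact absurd hgt (not_lt_of_lequiv R hT hE hD hS hR hFN hEM (leq_symm R h))
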